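/- Let Δ be a (p−1)-dimensional balanced simplicial complex with vertex partition V_1, …, V_p such that every face contains at most one vertex of each V_i, and suppose every subset of the vertex set of cardinality at most p−1 containing at most one vertex from each V_i is a face of Δ. If gr_{p−1}(Δ) ≤ 2p, then there exist vertices v_{i,0}, v_{i,1} ∈ V_i for each 1 ≤ i ≤ p such that {v_{1,j_1}, …, v_{p,j_p}} is a face of Δ for all (j_1, …, j_p) ∈ {0,1}^p; that is, Δ contains the boundary of the p-dimensional cross-polytope as a subcomplex (in fact as an induced subcomplex on these 2p vertices). -/
import Mathlib


open Finset

/-- An (abstract) simplicial complex on vertex type `V`: a collection of finite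
subsets of `V` (the faces) closed under taking subsets. -/
structure SC (V : Type*) where
  faces : Set (Finset V)
  down_closed : ∀ {F G : Finset V}, F ∈ faces → G ⊆ F → G ∈ faces

namespace SC

variable {V : Type*} [LinearOrder V]

/-- The vertex set of a simplicial complex. -/
def vertexSet (K : SC V) : Set V := {v | {v} ∈ K.faces}

/-- The induced subcomplex `K[W]` on a set `W` of vertices. -/
def restrict (K : SC V) (W : Set V) : SC V where
  faces := {F | F ∈ K.faces ∧ ↑F ⊆ W}
  down_closed := fun hF hGF =>
    ⟨K.down_closed hF.1 hGF, Set.Subset.trans (Finset.coe_subset.mpr hGF) hF.2⟩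

/-- The link `lk_K(F)` of a face `F`: all `G` disjoint from `F` with `F ∪ G ∈ K`. -/
def link (K : SC V) (F : Finset V) : SC V where
  faces := {G | Disjoint F G ∧ F ∪ G ∈ K.faces}
  down_closed := fun hG hHG =>
    ⟨hG.1.mono_right (Finset.le_iff_subset.mpr hHG),
      K.down_closed hG.2 (Finset.union_subset_union_right hHG)⟩

/-- A complex is flag if every set all of whose subsets of cardinality at most 2
are faces is itself a face (equivalently, all minimal non-faces have two vertices). -/
def Flag (K : SC V) : Prop :=
  ∀ F : Finset V, (∀ G ⊆ F, G.card ≤ 2 → G ∈ K.faces) → F ∈ K.faces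

/-- The faces of `K` with exactly `n` vertices (i.e. of dimension `n-1`). -/
def faceSet (K : SC V) (n : ℕ) : Set (Finset V) := {F | F ∈ K.faces ∧ F.card = n}

variable (k : Type*) [Field k]

/-- Simplicial `(n-1)`-chains with coefficients in `k`: formal `k`-linear
combinations of faces with `n` vertices.  (`n = 0` corresponds to the empty face,
used for *reduced* homology.) -/
abbrev Chains (K : SC V) (n : ℕ) := (faceSet K n) →₀ k

/-- The boundary of a single face, with the usual signs determined by the
linear order on the vertices. -/
noncomputable def bdFace (K : SC V) (n : ℕ) (F : faceSet K (n + 1)) : Chains k K n :=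
  ∑ v ∈ (F : Finset V).attach,
    ((-1 : k) ^ (((F : Finset V).filter (fun x => x < (v : V))).card)) •
      Finsupp.single (⟨(F : Finset V).erase v,
        K.down_closed F.2.1 (Finset.erase_subset _ _),
        by rw [Finset.card_erase_of_mem v.2, F.2.2]; rfl⟩ : faceSet K n) 1

/-- The simplicial boundary map. -/
noncomputable def bd (K : SC V) (n : ℕ) : Chains k K (n + 1) →ₗ[k] Chains k K n :=
  Finsupp.lsum k fun F => LinearMap.toSpanSingleton k _ (bdFace k K n F)

/-- The reduced cycles in degree `n - 1` (chains supported on faces with `n` vertices). -/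
noncomputable def cycles (K : SC V) : (n : ℕ) → Submodule k (Chains k K n)
  | 0 => ⊤
  | (m + 1) => LinearMap.ker (bd k K m)

/-- The boundaries in degree `n - 1`. -/
noncomputable def boundaries (K : SC V) (n : ℕ) : Submodule k (Chains k K n) :=
  LinearMap.range (bd k K n)

/-- `HNonzero k K n` says that the reduced simplicial homology `H̃_{n-1}(K; k)`
is nonzero: some reduced cycle on faces with `n` vertices is not a boundary. -/
def HNonzero (K : SC V) (n : ℕ) : Prop := ¬ (cycles k K n ≤ boundaries k K n)

/-- The dimension of the reduced homology `H̃_{n-1}(K; k)` as a `k`-vector space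
(for finite complexes): `dim (cycles) - dim (boundaries ∩ cycles)`. -/
noncomputable def homDim (K : SC V) (n : ℕ) : ℕ :=
  Module.finrank k ↥(cycles k K n) -
    Module.finrank k ↥(boundaries k K n ⊓ cycles k K n)

/-- `girth k K p` is the `(p-1)`-girth `gr_{p-1}(K)` over the field `k`: the least
cardinality of a vertex set `W` such that `H̃_{p-1}(lk_K(F)[W]; k) ≠ 0` for some
face `F` of `K` (including the empty face), or `∞` if there is no such `W`. -/
noncomputable def girth (K : SC V) (p : ℕ) : ℕ∞ :=
  sInf ((fun W : Finset V => (W.card : ℕ∞)) ''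
    {W : Finset V | ∃ F ∈ K.faces, HNonzero k ((K.link F).restrict ↑W) p})

/-- A non-returning walk of length `len` in the directed 1-skeleton of `K`:
consecutive vertices span edges, and no three consecutive vertices return
(`v_i ≠ v_{i+2}`) or span a 2-face of `K`. -/
def IsNRWalk (K : SC V) (len : ℕ) (w : ℕ → V) : Prop :=
  (∀ i < len, w i ≠ w (i + 1) ∧ ({w i, w (i + 1)} : Finset V) ∈ K.faces) ∧
  (∀ i, i + 2 ≤ len → w i ≠ w (i + 2) ∧ ({w i, w (i + 1), w (i + 2)} : Finset V) ∉ K.faces)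

end SC

section Helpers
namespace CPG
open SC Finset
variable {V : Type*} [LinearOrder V] (k : Type*) [Field k] (K : SC V)

lemma bdFace_apply_eq_zero {n : ℕ} (F : SC.faceSet K (n+1)) (G : SC.faceSet K n)
    (h : ¬ (↑G : Finset V) ⊆ ↑F) : SC.bdFace k K n F G = 0 := by
  classical
  unfold SC.bdFace
  rw [Finsupp.finset_sum_apply]
  refine Finset.sum_eq_zero fun v _ => ?_
  rw [Finsupp.smul_apply, Finsupp.single_apply, if_neg, smul_zero]
  intro he
  exact h (by rw [← congrArg Subtype.val he]; exact Finset.erase_subset _ _)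

lemma bdFace_apply_ne_zero {n : ℕ} (F : SC.faceSet K (n+1)) (G : SC.faceSet K n)
    (h : (↑G : Finset V) ⊆ ↑F) : SC.bdFace k K n F G ≠ 0 := by
  classical
  obtain ⟨u, hu⟩ : ∃ u, ((F : Finset V) \ ↑G) = {u} := Finset.card_eq_one.mp (by
    rw [Finset.card_sdiff_of_subset h, F.2.2, G.2.2]; omega)
  have huF : u ∈ (F : Finset V) := (Finset.mem_sdiff.mp (hu ▸ Finset.mem_singleton_self u)).1
  have huG : u ∉ (G : Finset V) := (Finset.mem_sdiff.mp (hu ▸ Finset.mem_singleton_self u)).2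
  have hGe : (F : Finset V).erase u = ↑G := by
    apply Finset.eq_of_subset_of_card_le
    · intro x hx
      rcases Finset.mem_erase.mp hx with ⟨hxu, hxF⟩
      by_contra hxG
      exact hxu (Finset.mem_singleton.mp (hu ▸ Finset.mem_sdiff.mpr ⟨hxF, hxG⟩))
    · rw [Finset.card_erase_of_mem huF, F.2.2, G.2.2]; omega
  unfold SC.bdFace
  rw [Finsupp.finset_sum_apply, Finset.sum_eq_single (⟨u, huF⟩ : {x // x ∈ (F : Finset V)})]
  · rw [Finsupp.smul_apply, Finsupp.single_apply, if_pos (Subtype.ext hGe), smul_eq_mul, mul_one]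
    exact pow_ne_zero _ (neg_ne_zero.mpr one_ne_zero)
  · intro v _ hv
    rw [Finsupp.smul_apply, Finsupp.single_apply, if_neg, smul_zero]
    intro he
    have hev : (F : Finset V).erase ↑v = ↑G := congrArg Subtype.val he
    apply hv
    have : (v : V) ∈ (F : Finset V) \ ↑G := Finset.mem_sdiff.mpr ⟨v.2, fun hvG => by
      exact (Finset.mem_erase.mp (hev ▸ hvG)).1 rfl⟩
    exact Subtype.ext (Finset.mem_singleton.mp (hu ▸ this))
  · intro hnot
    exact absurd (Finset.mem_attach _ _) hnot

lemma bd_apply {n : ℕ} (c : SC.Chains k K (n+1)) (G : SC.faceSet K n) :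
    SC.bd k K n c G = ∑ F ∈ c.support, c F * (SC.bdFace k K n F G) := by
  classical
  unfold SC.bd
  rw [Finsupp.lsum_apply]
  rw [Finsupp.sum_apply]
  rw [Finsupp.sum]
  rw [Finset.sum_congr rfl]
  intro F _
  rw [LinearMap.toSpanSingleton_apply, Finsupp.smul_apply, smul_eq_mul]

end CPG
end Helpers


lemma CPG.core {V : Type*} [LinearOrder V] (k : Type*) [Field k] (m : ℕ)
    (Δ : SC V) (Vp : Fin (m+1) → Finset V) (W : Finset V)
    (hdisj : ∀ i j, i ≠ j → Disjoint (Vp i) (Vp j))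
    (hvert : ∀ v : V, ({v} : Finset V) ∈ Δ.faces ↔ ∃ i, v ∈ Vp i)
    (hbal : ∀ F ∈ Δ.faces, ∀ i, (F ∩ Vp i).card ≤ 1)
    (hskel : ∀ F : Finset V, F.card ≤ (m+1) - 1 → (∀ i, (F ∩ Vp i).card ≤ 1) →
      (∀ v ∈ F, ∃ i, v ∈ Vp i) → F ∈ Δ.faces)
    (hWcard : W.card ≤ 2 * (m+1))
    (K : SC V) (hKmem : ∀ {G : Finset V}, G ∈ K.faces ↔ G ∈ Δ.faces ∧ ↑G ⊆ (↑W : Set V))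
    (c : SC.Chains k K (m+1)) (hc0 : SC.bd k K m c = 0)
    (F₀ : SC.faceSet K (m+1)) (hF₀s : F₀ ∈ c.support) :
    ∃ g : Fin (m+1) → Fin 2 → V, (∀ i j, g i j ∈ Vp i) ∧ (∀ i, g i 0 ≠ g i 1) ∧
      ∀ f : Fin (m+1) → Fin 2,
        (Finset.image (fun i => g i (f i)) Finset.univ) ∈ Δ.faces := by
  classical
  have hcF₀ : c F₀ ≠ 0 := Finsupp.mem_support_iff.mp hF₀s
  -- basic vertex facts
  have hvertW : ∀ T ∈ Δ.faces, ∀ v ∈ T, ∃ i, v ∈ Vp i := fun T hT v hv =>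
    (hvert v).mp (Δ.down_closed hT (Finset.singleton_subset_iff.mpr hv))
  -- every top face has exactly one vertex in each part
  have hTop1 : ∀ T, T ∈ Δ.faces → T.card = m + 1 → ∀ i, (T ∩ Vp i).card = 1 := by
    intro T hT hcard i
    have hTeq : T = Finset.univ.biUnion (fun j => T ∩ Vp j) := by
      ext v
      simp only [Finset.mem_biUnion, Finset.mem_univ, true_and, Finset.mem_inter]
      constructor
      · intro hv
        obtain ⟨j, hj⟩ := hvertW T hT v hv
        exact ⟨j, hv, hj⟩
      · rintro ⟨j, hvT, -⟩; exact hvT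
    have hsum : ∑ j, (T ∩ Vp j).card = m + 1 := by
      rw [← Finset.card_biUnion, ← hTeq, hcard]
      intro x _ y _ hxy
      exact (hdisj x y hxy).mono Finset.inter_subset_right Finset.inter_subset_right
    have hre : ∑ j ∈ Finset.univ.erase i, (T ∩ Vp j).card ≤ m := by
      calc ∑ j ∈ Finset.univ.erase i, (T ∩ Vp j).card ≤ ∑ _j ∈ Finset.univ.erase i, 1 :=
            Finset.sum_le_sum (fun j _ => hbal T hT j)
        _ = m := by simp [Finset.card_erase_of_mem (Finset.mem_univ i)]
    have hadd : (T ∩ Vp i).card + ∑ j ∈ Finset.univ.erase i, (T ∩ Vp j).card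
        = ∑ j, (T ∩ Vp j).card := Finset.add_sum_erase Finset.univ (fun j => (T ∩ Vp j).card) (Finset.mem_univ i)
    have := hbal T hT i
    omega
  have hTopW : ∀ T, T ∈ Δ.faces → ↑T ⊆ (↑W : Set V) → T.card = m + 1 → ∀ i,
      ∃ u, u ∈ W ∩ Vp i ∧ T ∩ Vp i = {u} := by
    intro T hT hTW hcard i
    obtain ⟨u, hu⟩ := Finset.card_eq_one.mp (hTop1 T hT hcard i)
    have huT : u ∈ T := (Finset.mem_inter.mp (hu ▸ Finset.mem_singleton_self u)).1
    have huV : u ∈ Vp i := (Finset.mem_inter.mp (hu ▸ Finset.mem_singleton_self u)).2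
    exact ⟨u, Finset.mem_inter.mpr ⟨Finset.mem_coe.mp (hTW (Finset.mem_coe.mpr huT)), huV⟩, hu⟩
  -- erasing a vertex from a top face of K gives a face of K with m vertices
  have hGmem : ∀ T, T ∈ Δ.faces → ↑T ⊆ (↑W : Set V) → T.card = m + 1 → ∀ v ∈ T,
      T.erase v ∈ SC.faceSet K m := by
    intro T hT hTW hcard v hv
    have hcd : (T.erase v).card = m := by
      rw [Finset.card_erase_of_mem hv, hcard]
      omega
    refine ⟨hKmem.mpr ⟨?_, ?_⟩, hcd⟩
    · refine hskel _ (by omega) (fun i => ?_)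
        (fun x hx => hvertW T hT x (Finset.erase_subset _ _ hx))
      exact le_trans (Finset.card_le_card
        (Finset.inter_subset_inter (Finset.erase_subset _ _) (subset_refl _))) (hbal T hT i)
    · exact Set.Subset.trans (Finset.coe_subset.mpr (Finset.erase_subset _ _)) hTW
  -- key lemma
  have hKey : ∀ (G : SC.faceSet K m) (T : SC.faceSet K (m+1)), (↑G : Finset V) ⊆ ↑T →
      (∀ T' : SC.faceSet K (m+1), T' ∈ c.support → (↑G : Finset V) ⊆ ↑T' → T' = T) →
      c T = 0 := by
    intro G T hGT huniq
    have h0 : SC.bd k K m c G = 0 := by rw [hc0]; rfl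
    rw [CPG.bd_apply] at h0
    rw [Finset.sum_eq_single T] at h0
    · exact (mul_eq_zero.mp h0).resolve_right (CPG.bdFace_apply_ne_zero k K T G hGT)
    · intro F hFs hFT
      rcases eq_or_ne (SC.bdFace k K m F G) 0 with h | h
      · rw [h, mul_zero]
      · have hsub : (↑G : Finset V) ⊆ ↑F := by
          by_contra hn
          exact h (CPG.bdFace_apply_eq_zero k K F G hn)
        exact absurd (huniq F hFs hsub) hFT
    · intro hT
      rw [Finsupp.notMem_support_iff.mp hT, zero_mul]
  -- F₀ is a top face of K
  have hF₀Δ : (↑F₀ : Finset V) ∈ Δ.faces := (hKmem.mp F₀.2.1).1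
  have hF₀W : ↑(F₀ : Finset V) ⊆ (↑W : Set V) := (hKmem.mp F₀.2.1).2
  -- Step B : each part meets W in at least two vertices
  have h2 : ∀ i, 2 ≤ (W ∩ Vp i).card := by
    intro i
    by_contra hlt
    push_neg at hlt
    obtain ⟨v, hvWV, hvF⟩ := hTopW _ hF₀Δ hF₀W F₀.2.2 i
    have hWVi : W ∩ Vp i = {v} := by
      refine (Finset.eq_of_subset_of_card_le (Finset.singleton_subset_iff.mpr hvWV) ?_).symm
      rw [Finset.card_singleton]; omega
    have hvF₀ : v ∈ (F₀ : Finset V) := (Finset.mem_inter.mp (hvF ▸ Finset.mem_singleton_self v)).1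
    have hG : (F₀ : Finset V).erase v ∈ SC.faceSet K m := hGmem _ hF₀Δ hF₀W F₀.2.2 v hvF₀
    refine hcF₀ (hKey ⟨_, hG⟩ F₀ (Finset.erase_subset _ _) ?_)
    intro T' hT's hGT'
    have hT'Δ : (↑T' : Finset V) ∈ Δ.faces := (hKmem.mp T'.2.1).1
    have hT'W : ↑(T' : Finset V) ⊆ (↑W : Set V) := (hKmem.mp T'.2.1).2
    obtain ⟨u, huWV, huT'⟩ := hTopW _ hT'Δ hT'W T'.2.2 i
    have hu : u = v := Finset.mem_singleton.mp (hWVi ▸ huWV)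
    subst hu
    have hvT' : u ∈ (T' : Finset V) := (Finset.mem_inter.mp (huT' ▸ Finset.mem_singleton_self u)).1
    have hins : insert u ((F₀ : Finset V).erase u) ⊆ ↑T' :=
      Finset.insert_subset_iff.mpr ⟨hvT', hGT'⟩
    have hie : insert u ((F₀ : Finset V).erase u) = ↑F₀ := Finset.insert_erase hvF₀
    apply Subtype.ext
    have hcards : (T' : Finset V).card ≤ (insert u ((F₀ : Finset V).erase u)).card := by
      rw [hie, F₀.2.2, T'.2.2]
    exact ((Finset.eq_of_subset_of_card_le hins hcards).symm).trans hie
  -- Step C : each part meets W in exactly two vertices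
  have hW2 : ∀ i, (W ∩ Vp i).card = 2 := by
    have hbig : Finset.univ.biUnion (fun j => W ∩ Vp j) ⊆ W := by
      intro x hx
      obtain ⟨j, -, hj⟩ := Finset.mem_biUnion.mp hx
      exact (Finset.mem_inter.mp hj).1
    have hsumW : ∑ j, (W ∩ Vp j).card ≤ 2 * (m + 1) := by
      rw [← Finset.card_biUnion (fun x _ y _ hxy =>
        (hdisj x y hxy).mono Finset.inter_subset_right Finset.inter_subset_right)]
      exact le_trans (Finset.card_le_card hbig) hWcard
    intro i
    have hre : 2 * m ≤ ∑ j ∈ Finset.univ.erase i, (W ∩ Vp j).card := by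
      calc 2 * m = ∑ _j ∈ Finset.univ.erase i, 2 := by
            simp [Finset.card_erase_of_mem (Finset.mem_univ i), mul_comm]
        _ ≤ _ := Finset.sum_le_sum (fun j _ => h2 j)
    have hadd : (W ∩ Vp i).card + ∑ j ∈ Finset.univ.erase i, (W ∩ Vp j).card
        = ∑ j, (W ∩ Vp j).card :=
      Finset.add_sum_erase Finset.univ (fun j => (W ∩ Vp j).card) (Finset.mem_univ i)
    have := h2 i
    omega
  -- Step D : pick the two vertices in each part
  have hex : ∀ i, ∃ x y, x ≠ y ∧ W ∩ Vp i = {x, y} := fun i => Finset.card_eq_two.mp (hW2 i)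
  choose a b hab hWab using hex
  set g : Fin (m+1) → Fin 2 → V := fun i j => if j = 0 then a i else b i with hgdef
  have hgW : ∀ i j, g i j ∈ W ∩ Vp i := by
    intro i j
    rw [hWab i]
    by_cases hj : j = 0
    · rw [hgdef]; simp only [if_pos hj]
      exact Finset.mem_insert_self _ _
    · rw [hgdef]; simp only [if_neg hj]
      exact Finset.mem_insert_of_mem (Finset.mem_singleton_self _)
  have hgV : ∀ i j, g i j ∈ Vp i := fun i j => (Finset.mem_inter.mp (hgW i j)).2
  have hgWm : ∀ i j, g i j ∈ W := fun i j => (Finset.mem_inter.mp (hgW i j)).1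
  have hfin2 : ∀ j : Fin 2, j = 0 ∨ j = 1 := by decide
  have hg0 : ∀ i, g i 0 = a i := fun i => by
    simp only [hgdef, if_pos rfl]
  have hg1 : ∀ i, g i 1 = b i := fun i => by
    simp only [hgdef]
    exact if_neg (by decide : ¬ (1 : Fin 2) = 0)
  have hgne : ∀ i, ∀ {j j' : Fin 2}, j ≠ j' → g i j ≠ g i j' := by
    intro i j j' hjj
    rcases hfin2 j with rfl | rfl <;> rcases hfin2 j' with rfl | rfl
    · exact absurd rfl hjj
    · rw [hg0, hg1]; exact hab i
    · rw [hg0, hg1]; exact fun h => hab i h.symm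
    · exact absurd rfl hjj
  -- transversal facts
  have hginj : ∀ f : Fin (m+1) → Fin 2, Function.Injective fun i => g i (f i) := by
    intro f i i' h
    by_contra hne
    have h2 : g i (f i) ∈ Vp i' := by
      rw [show g i (f i) = g i' (f i') from h]
      exact hgV i' (f i')
    exact (Finset.disjoint_left.mp (hdisj i i' hne)) (hgV i (f i)) h2
  have hTcard : ∀ f : Fin (m+1) → Fin 2,
      (Finset.image (fun i => g i (f i)) Finset.univ).card = m + 1 := by
    intro f
    rw [Finset.card_image_of_injective _ (hginj f), Finset.card_univ, Fintype.card_fin]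
  have hTWs : ∀ f : Fin (m+1) → Fin 2,
      ↑(Finset.image (fun i => g i (f i)) Finset.univ) ⊆ (↑W : Set V) := by
    intro f x hx
    rw [Finset.mem_coe, Finset.mem_image] at hx
    obtain ⟨i, -, rfl⟩ := hx
    exact hgWm i (f i)
  have hmemT : ∀ (f : Fin (m+1) → Fin 2) i,
      g i (f i) ∈ Finset.image (fun i => g i (f i)) Finset.univ :=
    fun f i => Finset.mem_image.mpr ⟨i, Finset.mem_univ i, rfl⟩
  have hTi : ∀ (f : Fin (m+1) → Fin 2) i,
      (Finset.image (fun i => g i (f i)) Finset.univ) ∩ Vp i = {g i (f i)} := by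
    intro f i
    ext x
    constructor
    · intro hx
      obtain ⟨hx1, hx2⟩ := Finset.mem_inter.mp hx
      obtain ⟨i', -, rfl⟩ := Finset.mem_image.mp hx1
      rcases eq_or_ne i' i with rfl | hne
      · exact Finset.mem_singleton_self _
      · exact absurd hx2 (Finset.disjoint_left.mp (hdisj i' i hne) (hgV i' (f i')))
    · intro hx
      rw [Finset.mem_singleton.mp hx]
      exact Finset.mem_inter.mpr ⟨hmemT f i, hgV i (f i)⟩
  -- Base: F₀ is a transversal with nonzero coefficient
  have hexu : ∀ i, ∃ u, u ∈ W ∩ Vp i ∧ (↑F₀ : Finset V) ∩ Vp i = {u} :=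
    fun i => hTopW _ hF₀Δ hF₀W F₀.2.2 i
  choose u huWV huF using hexu
  set f₀ : Fin (m+1) → Fin 2 := fun i => if u i = a i then 0 else 1 with hf₀def
  have hgf₀ : ∀ i, g i (f₀ i) = u i := by
    intro i
    by_cases h : u i = a i
    · rw [hf₀def]; simp only [if_pos h]
      rw [hgdef]; simp only [if_pos rfl]
      exact h.symm
    · have hb : u i = b i := by
        have hm := hWab i ▸ huWV i
        rcases Finset.mem_insert.mp hm with h' | h'
        · exact absurd h' h
        · exact Finset.mem_singleton.mp h'
      rw [hf₀def]; simp only [if_neg h]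
      rw [hgdef]; simp only [if_neg one_ne_zero]
      exact hb.symm
  have hTf₀ : Finset.image (fun i => g i (f₀ i)) Finset.univ = ↑F₀ := by
    apply Finset.eq_of_subset_of_card_le
    · intro x hx
      obtain ⟨i, -, rfl⟩ := Finset.mem_image.mp hx
      rw [hgf₀ i]
      exact (Finset.mem_inter.mp ((huF i) ▸ Finset.mem_singleton_self _)).1
    · rw [hTcard, F₀.2.2]
  -- Step E : propagate along hypercube edges
  have hstep : ∀ (f : Fin (m+1) → Fin 2) (i : Fin (m+1)) (j : Fin 2),
      (∃ hT : (Finset.image (fun i' => g i' (f i')) Finset.univ) ∈ SC.faceSet K (m+1), c ⟨(Finset.image (fun i' => g i' (f i')) Finset.univ), hT⟩ ≠ 0) →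
      ∃ hT : (Finset.image (fun i' => g i' (Function.update f i j i')) Finset.univ) ∈ SC.faceSet K (m+1), c ⟨(Finset.image (fun i' => g i' (Function.update f i j i')) Finset.univ), hT⟩ ≠ 0 := by
    intro f i j hPf
    rcases eq_or_ne j (f i) with rfl | hne
    · simpa [Function.update_eq_self] using hPf
    obtain ⟨hT, hcT⟩ := hPf
    have hTΔ : (Finset.image (fun i' => g i' (f i')) Finset.univ) ∈ Δ.faces := (hKmem.mp hT.1).1
    have hG : (Finset.image (fun i' => g i' (f i')) Finset.univ).erase (g i (f i)) ∈ SC.faceSet K m :=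
      hGmem _ hTΔ (hTWs f) (hTcard f) _ (hmemT f i)
    have hGi : ∀ x ∈ (Finset.image (fun i' => g i' (f i')) Finset.univ).erase (g i (f i)), x ∉ Vp i := by
      intro x hx hxV
      have hxT : x ∈ (Finset.image (fun i' => g i' (f i')) Finset.univ) := Finset.erase_subset _ _ hx
      have hxm : x ∈ (Finset.image (fun i' => g i' (f i')) Finset.univ) ∩ Vp i := Finset.mem_inter.mpr ⟨hxT, hxV⟩
      rw [hTi f i] at hxm
      exact (Finset.mem_erase.mp hx).1 (Finset.mem_singleton.mp hxm)
    have hT'eq : (Finset.image (fun i' => g i' (Function.update f i j i')) Finset.univ) = insert (g i j) ((Finset.image (fun i' => g i' (f i')) Finset.univ).erase (g i (f i))) := by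
      ext x
      constructor
      · intro hx
        obtain ⟨i', -, rfl⟩ := Finset.mem_image.mp hx
        rcases eq_or_ne i' i with rfl | hne'
        · rw [Function.update_self]
          exact Finset.mem_insert_self _ _
        · rw [Function.update_of_ne hne']
          refine Finset.mem_insert_of_mem (Finset.mem_erase.mpr
            ⟨?_, Finset.mem_image.mpr ⟨i', Finset.mem_univ _, rfl⟩⟩)
          intro hEq
          have h2 : g i' (f i') ∈ Vp i := by rw [hEq]; exact hgV i (f i)
          exact (Finset.disjoint_left.mp (hdisj i' i hne')) (hgV i' (f i')) h2
      · intro hx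
        rcases Finset.mem_insert.mp hx with rfl | hx'
        · refine Finset.mem_image.mpr ⟨i, Finset.mem_univ _, ?_⟩
          rw [Function.update_self]
        · have hxT : x ∈ (Finset.image (fun i' => g i' (f i')) Finset.univ) := Finset.erase_subset _ _ hx'
          have hxv : x ≠ g i (f i) := (Finset.mem_erase.mp hx').1
          obtain ⟨i', -, rfl⟩ := Finset.mem_image.mp hxT
          refine Finset.mem_image.mpr ⟨i', Finset.mem_univ _, ?_⟩
          rcases eq_or_ne i' i with rfl | hne'
          · exact absurd rfl hxv
          · rw [Function.update_of_ne hne']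
    have hTins : (Finset.image (fun i' => g i' (f i')) Finset.univ) = insert (g i (f i)) ((Finset.image (fun i' => g i' (f i')) Finset.univ).erase (g i (f i))) := (Finset.insert_erase (hmemT f i)).symm
    have hcase : ∀ T'' : SC.faceSet K (m+1), (Finset.image (fun i' => g i' (f i')) Finset.univ).erase (g i (f i)) ⊆ ↑T'' →
        (↑T'' : Finset V) = (Finset.image (fun i' => g i' (f i')) Finset.univ) ∨ (↑T'' : Finset V) = (Finset.image (fun i' => g i' (Function.update f i j i')) Finset.univ) := by
      intro T'' hGT''
      have hT''Δ : (↑T'' : Finset V) ∈ Δ.faces := (hKmem.mp T''.2.1).1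
      have hT''W : ↑(T'' : Finset V) ⊆ (↑W : Set V) := (hKmem.mp T''.2.1).2
      obtain ⟨w, hwWV, hwT⟩ := hTopW _ hT''Δ hT''W T''.2.2 i
      have hwT'' : w ∈ (T'' : Finset V) :=
        (Finset.mem_inter.mp (hwT ▸ Finset.mem_singleton_self w)).1
      have hwVi : w ∈ Vp i := (Finset.mem_inter.mp hwWV).2
      have hwG : w ∉ (Finset.image (fun i' => g i' (f i')) Finset.univ).erase (g i (f i)) := fun h => hGi w h hwVi
      have hins : insert w ((Finset.image (fun i' => g i' (f i')) Finset.univ).erase (g i (f i))) ⊆ ↑T'' := Finset.insert_subset_iff.mpr ⟨hwT'', hGT''⟩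
      have hEq : insert w ((Finset.image (fun i' => g i' (f i')) Finset.univ).erase (g i (f i))) = ↑T'' :=
        Finset.eq_of_subset_of_card_le hins
          (by rw [T''.2.2, Finset.card_insert_of_notMem hwG, hG.2])
      have hw2 : w = g i (f i) ∨ w = g i j := by
        have hm : w ∈ ({a i, b i} : Finset V) := hWab i ▸ hwWV
        rcases hfin2 (f i) with hfi | hfi <;> rcases hfin2 j with hj | hj
        · exact absurd (hj.trans hfi.symm) hne
        · rcases Finset.mem_insert.mp hm with h' | h'
          · left; rw [hfi, hg0]; exact h'
          · right; rw [hj, hg1]; exact Finset.mem_singleton.mp h'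
        · rcases Finset.mem_insert.mp hm with h' | h'
          · right; rw [hj, hg0]; exact h'
          · left; rw [hfi, hg1]; exact Finset.mem_singleton.mp h'
        · exact absurd (hj.trans hfi.symm) hne
      rcases hw2 with rfl | rfl
      · exact Or.inl (hEq.symm.trans hTins.symm)
      · exact Or.inr (hEq.symm.trans hT'eq.symm)
    have hT'K : (Finset.image (fun i' => g i' (Function.update f i j i')) Finset.univ) ∈ SC.faceSet K (m+1) := by
      by_contra hnot
      apply hcT
      apply hKey ⟨(Finset.image (fun i' => g i' (f i')) Finset.univ).erase (g i (f i)), hG⟩ ⟨(Finset.image (fun i' => g i' (f i')) Finset.univ), hT⟩ (Finset.erase_subset _ _)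
      intro T'' hT''s hGT''
      rcases hcase T'' hGT'' with h | h
      · exact Subtype.ext h
      · exact absurd (h ▸ T''.2) hnot
    refine ⟨hT'K, ?_⟩
    intro hzero
    apply hcT
    apply hKey ⟨(Finset.image (fun i' => g i' (f i')) Finset.univ).erase (g i (f i)), hG⟩ ⟨(Finset.image (fun i' => g i' (f i')) Finset.univ), hT⟩ (Finset.erase_subset _ _)
    intro T'' hT''s hGT''
    rcases hcase T'' hGT'' with h | h
    · exact Subtype.ext h
    · exfalso
      have hTT : T'' = (⟨(Finset.image (fun i' => g i' (Function.update f i j i')) Finset.univ), hT'K⟩ : SC.faceSet K (m+1)) := Subtype.ext h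
      rw [Finsupp.mem_support_iff, hTT] at hT''s
      exact hT''s hzero
  -- Step F : induction over the hypercube
  have hall : ∀ (n : ℕ) (f : Fin (m+1) → Fin 2),
      (Finset.univ.filter (fun i => f i ≠ f₀ i)).card ≤ n →
      ∃ hT : Finset.image (fun i => g i (f i)) Finset.univ ∈ SC.faceSet K (m+1),
        c ⟨Finset.image (fun i => g i (f i)) Finset.univ, hT⟩ ≠ 0 := by
    intro n
    induction n with
    | zero =>
      intro f hf
      have hfe : f = f₀ := by
        funext i
        by_contra hne
        have hmem : i ∈ Finset.univ.filter (fun i => f i ≠ f₀ i) :=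
          Finset.mem_filter.mpr ⟨Finset.mem_univ i, hne⟩
        have := Finset.card_pos.mpr ⟨i, hmem⟩
        omega
      subst hfe
      refine ⟨hTf₀ ▸ F₀.2, ?_⟩
      have hsub : (⟨Finset.image (fun i => g i (f₀ i)) Finset.univ, hTf₀ ▸ F₀.2⟩
          : SC.faceSet K (m+1)) = F₀ := Subtype.ext hTf₀
      rw [hsub]
      exact hcF₀
    | succ n ih =>
      intro f hf
      by_cases hle : (Finset.univ.filter (fun i => f i ≠ f₀ i)).card ≤ n
      · exact ih f hle
      have hpos : 0 < (Finset.univ.filter (fun i => f i ≠ f₀ i)).card := by omega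
      obtain ⟨i, hi⟩ := Finset.card_pos.mp hpos
      have hcard' : (Finset.univ.filter
          (fun i' => Function.update f i (f₀ i) i' ≠ f₀ i')).card ≤ n := by
        have hsub : Finset.univ.filter (fun i' => Function.update f i (f₀ i) i' ≠ f₀ i')
            ⊆ (Finset.univ.filter (fun i' => f i' ≠ f₀ i')).erase i := by
          intro x hx
          have hx2 := (Finset.mem_filter.mp hx).2
          rcases eq_or_ne x i with rfl | hxi
          · rw [Function.update_self] at hx2
            exact absurd rfl hx2
          · rw [Function.update_of_ne hxi] at hx2
            exact Finset.mem_erase.mpr ⟨hxi, Finset.mem_filter.mpr ⟨Finset.mem_univ x, hx2⟩⟩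
        have h3 := Finset.card_le_card hsub
        rw [Finset.card_erase_of_mem hi] at h3
        omega
      have hPf' := ih _ hcard'
      have hupd : Function.update (Function.update f i (f₀ i)) i (f i) = f := by
        funext x
        rcases eq_or_ne x i with rfl | hxi
        · rw [Function.update_self]
        · rw [Function.update_of_ne hxi, Function.update_of_ne hxi]
      have hres := hstep (Function.update f i (f₀ i)) i (f i) hPf'
      rwa [hupd] at hres
  -- conclusion
  refine ⟨g, hgV, fun i => hgne i (by decide : (0 : Fin 2) ≠ 1), fun f => ?_⟩
  obtain ⟨hT, -⟩ := hall (m+1) f (le_trans (Finset.card_filter_le _ _)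
    (by rw [Finset.card_univ, Fintype.card_fin]))
  exact (hKmem.mp hT.1).1

/-- Let `Δ` be a `(p-1)`-dimensional balanced complex with parts
`V_1, …, V_p`, containing its full balanced `(p-2)`-skeleton.  If
`gr_{p-1}(Δ) ≤ 2p`, then `Δ` contains the boundary of the `p`-dimensional
cross-polytope: vertices `v_{i,0} ≠ v_{i,1} ∈ V_i` such that every transversal
`{v_{1,j_1}, …, v_{p,j_p}}` is a face of `Δ`. -/
theorem crosspolytope_of_small_girth {V : Type*} [LinearOrder V] (k : Type*) [Field k]
    (p : ℕ) (hp : 2 ≤ p) (Δ : SC V) (Vp : Fin p → Finset V)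
    (hdisj : ∀ i j, i ≠ j → Disjoint (Vp i) (Vp j))
    (hvert : ∀ v : V, ({v} : Finset V) ∈ Δ.faces ↔ ∃ i, v ∈ Vp i)
    (hdim : ∀ F ∈ Δ.faces, F.card ≤ p) (hdim' : ∃ F ∈ Δ.faces, F.card = p)
    (hbal : ∀ F ∈ Δ.faces, ∀ i, (F ∩ Vp i).card ≤ 1)
    (hskel : ∀ F : Finset V, F.card ≤ p - 1 → (∀ i, (F ∩ Vp i).card ≤ 1) →
      (∀ v ∈ F, ∃ i, v ∈ Vp i) → F ∈ Δ.faces)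
    (hg : SC.girth k Δ p ≤ ((2 * p : ℕ) : ℕ∞)) :
    ∃ g : Fin p → Fin 2 → V, (∀ i j, g i j ∈ Vp i) ∧ (∀ i, g i 0 ≠ g i 1) ∧
      ∀ f : Fin p → Fin 2,
        (Finset.image (fun i => g i (f i)) Finset.univ) ∈ Δ.faces := by
  classical
  obtain ⟨m, rfl⟩ : ∃ m, p = m + 1 := ⟨p - 1, by omega⟩
  -- Step A: extract W and a nonzero top-dimensional cycle
  have h1 : SC.girth k Δ (m+1) < ((2 * (m+1) + 1 : ℕ) : ℕ∞) :=
    lt_of_le_of_lt hg (by exact_mod_cast Nat.lt_succ_self _)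
  rw [SC.girth] at h1
  obtain ⟨x, hxS, hxlt⟩ := sInf_lt_iff.mp h1
  obtain ⟨W, hWmem, rfl⟩ := hxS
  have hWcard : W.card ≤ 2 * (m + 1) := by
    simp only [] at hxlt
    have : W.card < 2 * (m+1) + 1 := by exact_mod_cast hxlt
    omega
  obtain ⟨F₁, hF₁, hH⟩ := hWmem
  rw [SC.HNonzero] at hH
  obtain ⟨c, hc_cyc, hc_nb⟩ := SetLike.not_le_iff_exists.mp hH
  have hc0 : SC.bd k ((Δ.link F₁).restrict ↑W) m c = 0 := by
    simpa [SC.cycles] using hc_cyc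
  have hcne : c ≠ 0 := fun h => hc_nb (h ▸ Submodule.zero_mem _)
  obtain ⟨F₀, hF₀s⟩ := Finsupp.support_nonempty_iff.mpr hcne
  have hcF₀ : c F₀ ≠ 0 := Finsupp.mem_support_iff.mp hF₀s
  obtain ⟨⟨hdj, hun⟩, hsubW⟩ := F₀.2.1
  have hF₁e : F₁ = ∅ := by
    have h1 := hdim (F₁ ∪ ↑F₀) hun
    rw [Finset.card_union_of_disjoint hdj, F₀.2.2] at h1
    exact Finset.card_eq_zero.mp (by omega)
  subst hF₁e
  refine CPG.core k m Δ Vp W hdisj hvert hbal hskel hWcard _ ?_ c hc0 F₀ hF₀s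
  intro G
  constructor
  · rintro ⟨⟨-, h2⟩, h3⟩; exact ⟨by simpa using h2, h3⟩
  · rintro ⟨h2, h3⟩; exact ⟨⟨Finset.disjoint_empty_left _, by simpa using h2⟩, h3⟩
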